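/- Let C₁,…,C_m be the clauses of a CNF formula over variables x₁,…,xₙ. Define the Kripke structure W=(S,R,π) over atomic propositions r₁,…,rₙ,p₁,…,pₙ by: S={c_i | i≤m} ∪ {u_{j,k}, ū_{j,k} | j,k∈{1,…,n}} ∪ {t_k, t̄_k | k∈{1,…,n}}; R contains (c_i,u_{j,1}) iff x_j occurs positively in C_i and (c_i,ū_{j,1}) iff x_j occurs negatively in C_i; for k<n, R contains (u_{j,k},u_{j,k+1}) and (ū_{j,k},ū_{j,k+1}); for all j,k, R contains (u_{j,k},t_k) and (ū_{j,k},t̄_k), and additionally (u_{j,k},t̄_k) and (ū_{j,k},t_k) whenever j≠k; π(t_k)={r_k,p_k}, π(t̄_k)={r_k}, and π(s)=∅ for all other states s. Then the CNF formula C₁∧…∧C_m is satisfiable if and only if W,{c₁,…,c_m} ⊨ ◇(⋀_{j=1}^{n} ◇^j (r_j ∧ dep(;p_j))), where ◇^j denotes j nested ◇ operators and dep(;p_j) the 0-ary dependence atom. -/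

import Mathlib

/-- Syntax of modal dependence logic (MDL) over atomic propositions `AP`. -/
inductive MDL (AP : Type) : Type where
  | top   : MDL AP                       -- ⊤
  | bot   : MDL AP                       -- ⊥
  | atom  : AP → MDL AP                  -- p
  | natom : AP → MDL AP                  -- ¬p
  | dep   : List AP → AP → MDL AP        -- dep(p₁,…,pₙ;q)
  | ndep  : List AP → AP → MDL AP        -- ¬dep(p₁,…,pₙ;q)
  | and   : MDL AP → MDL AP → MDL AP     -- ∧
  | dor   : MDL AP → MDL AP → MDL AP     -- dependence disjunction ∨
  | cor   : MDL AP → MDL AP → MDL AP     -- classical disjunction ⊻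
  | box   : MDL AP → MDL AP              -- □
  | dia   : MDL AP → MDL AP              -- ◇

/-- Team semantics of MDL over a Kripke structure `(S, R, π)`. -/
def MDL.sat {S AP : Type} (R : S → S → Prop) (π : S → Set AP) :
    MDL AP → Set S → Prop
  | .top, _ => True
  | .bot, T => T = ∅
  | .atom p, T => ∀ s ∈ T, p ∈ π s
  | .natom p, T => ∀ s ∈ T, p ∉ π s
  | .dep ps q, T => ∀ s₁ ∈ T, ∀ s₂ ∈ T,
      (∀ p ∈ ps, (p ∈ π s₁ ↔ p ∈ π s₂)) → (q ∈ π s₁ ↔ q ∈ π s₂)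
  | .ndep _ _, T => T = ∅
  | .and φ ψ, T => MDL.sat R π φ T ∧ MDL.sat R π ψ T
  | .dor φ ψ, T => ∃ T₁ T₂ : Set S, T = T₁ ∪ T₂ ∧ MDL.sat R π φ T₁ ∧ MDL.sat R π ψ T₂
  | .cor φ ψ, T => MDL.sat R π φ T ∨ MDL.sat R π ψ T
  | .box φ, T => MDL.sat R π φ {s' | ∃ s ∈ T, R s s'}
  | .dia φ, T => ∃ T' : Set S, MDL.sat R π φ T' ∧ ∀ s ∈ T, ∃ s' ∈ T', R s s'

/-- Big dependence disjunction ⋁ of a list of formulas (empty disjunction is ⊥). -/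
def MDL.bigDor {AP : Type} : List (MDL AP) → MDL AP
  | [] => .bot
  | [φ] => φ
  | φ :: ψ :: rest => .dor φ (MDL.bigDor (ψ :: rest))

/-- Big conjunction ⋀ of a list of formulas (empty conjunction is ⊤). -/
def MDL.bigAnd {AP : Type} : List (MDL AP) → MDL AP
  | [] => .top
  | [φ] => φ
  | φ :: ψ :: rest => .and φ (MDL.bigAnd (ψ :: rest))

/-- `◇^k φ` : `k` nested ◇ operators. -/
def MDL.diaIter {AP : Type} : ℕ → MDL AP → MDL AP
  | 0, φ => φ
  | n + 1, φ => .dia (MDL.diaIter n φ)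

/-- `□^k φ` : `k` nested □ operators. -/
def MDL.boxIter {AP : Type} : ℕ → MDL AP → MDL AP
  | 0, φ => φ
  | n + 1, φ => .box (MDL.boxIter n φ)

/-- A CNF formula with `m` clauses over `n` variables: `C i j = some true` iff
variable `x_j` occurs positively in clause `C_i`, `some false` iff it occurs
negatively, `none` iff it does not occur (each variable occurs at most once
per clause). -/
def CNF.Satisfiable {m n : ℕ} (C : Fin m → Fin n → Option Bool) : Prop :=
  ∃ θ : Fin n → Bool, ∀ i : Fin m, ∃ j : Fin n, C i j = some (θ j)

/-!
Choosing the team reached by the first `◇` amounts to choosing, for every clause, one of its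
literals (a chain world `u_{j,1}` or `ū_{j,1}`). Along a chain of variable `j` the sign is
remembered, and `◇^{j+1} r_j` forces each chain of that variable in the team to walk down to
level `j` and leave it towards `t_j` or `t̄_j`, where the sign is preserved. The atom `dep(;p_j)`
then says that all chosen literals of `x_j` have the same sign, so the choice is a satisfying
assignment. Conversely, a satisfying assignment `θ` gives the team of the chain starts of sign `θ`.
-/

theorem MDL.sat_bigAnd {S AP : Type} (R : S → S → Prop) (π : S → Set AP) (T : Set S) :
    ∀ L : List (MDL AP), MDL.sat R π (MDL.bigAnd L) T ↔ ∀ φ ∈ L, MDL.sat R π φ T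
  | [] => by simp [MDL.bigAnd, MDL.sat]
  | [φ] => by simp [MDL.bigAnd]
  | φ :: ψ :: L => by
      simp only [MDL.bigAnd, MDL.sat, MDL.sat_bigAnd R π T (ψ :: L), List.forall_mem_cons]

theorem MDL.sat_of_subset {S AP : Type} (R : S → S → Prop) (π : S → Set AP) :
    ∀ (φ : MDL AP) {T T' : Set S}, T ⊆ T' → MDL.sat R π φ T' → MDL.sat R π φ T
  | .top, _, _, _, _ => trivial
  | .bot, _, _, hT, h => Set.subset_eq_empty hT h
  | .atom _, _, _, hT, h => fun s hs => h s (hT hs)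
  | .natom _, _, _, hT, h => fun s hs => h s (hT hs)
  | .dep _ _, _, _, hT, h => fun s₁ h₁ s₂ h₂ => h s₁ (hT h₁) s₂ (hT h₂)
  | .ndep _ _, _, _, hT, h => Set.subset_eq_empty hT h
  | .and φ ψ, _, _, hT, h => ⟨φ.sat_of_subset R π hT h.1, ψ.sat_of_subset R π hT h.2⟩
  | .dor φ ψ, T, _, hT, ⟨T₁, T₂, hT', h₁, h₂⟩ =>
      ⟨T ∩ T₁, T ∩ T₂, by rw [← Set.inter_union_distrib_left, ← hT', Set.inter_eq_left.2 hT],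
        φ.sat_of_subset R π Set.inter_subset_right h₁,
        ψ.sat_of_subset R π Set.inter_subset_right h₂⟩
  | .cor φ ψ, _, _, hT, h => h.imp (φ.sat_of_subset R π hT) (ψ.sat_of_subset R π hT)
  | .box φ, _, _, hT, h => φ.sat_of_subset R π (by rintro _ ⟨s, hs, hss'⟩; exact ⟨s, hT hs, hss'⟩) h
  | .dia _, _, _, hT, ⟨T'', h, hsucc⟩ => ⟨T'', h, fun s hs => hsucc s (hT hs)⟩

def reachIn {S : Type} (R : S → S → Prop) : ℕ → S → S → Prop
  | 0 => Eq
  | k + 1 => fun s s'' => ∃ s', R s s' ∧ reachIn R k s' s''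

theorem reachIn_succ_of_reachIn_of_rel {S : Type} {R : S → S → Prop} :
    ∀ {k : ℕ} {s s' s'' : S}, reachIn R k s s' → R s' s'' → reachIn R (k + 1) s s''
  | 0, _, _, _, rfl, h => ⟨_, h, rfl⟩
  | _ + 1, _, _, _, ⟨s₁, h₁, h⟩, h' => ⟨s₁, h₁, reachIn_succ_of_reachIn_of_rel h h'⟩

theorem MDL.sat_diaIter_iff {S AP : Type} (R : S → S → Prop) (π : S → Set AP) (φ : MDL AP) :
    ∀ (k : ℕ) (T : Set S), MDL.sat R π (MDL.diaIter k φ) T ↔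
      ∃ T' : Set S, MDL.sat R π φ T' ∧ ∀ s ∈ T, ∃ s' ∈ T', reachIn R k s s'
  | 0, T => ⟨fun h => ⟨T, h, fun s hs => ⟨s, hs, rfl⟩⟩,
      fun ⟨_, h, hT⟩ => φ.sat_of_subset R π (fun s hs => by
        obtain ⟨_, hs', rfl⟩ := hT s hs; exact hs') h⟩
  | k + 1, T => by
    constructor
    · rintro ⟨T₁, h₁, hsucc⟩
      obtain ⟨T', h', hreach⟩ := (MDL.sat_diaIter_iff R π φ k T₁).1 h₁
      refine ⟨T', h', fun s hs => ?_⟩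
      obtain ⟨s₁, hs₁, hss₁⟩ := hsucc s hs
      obtain ⟨s', hs', hreach'⟩ := hreach s₁ hs₁
      exact ⟨s', hs', s₁, hss₁, hreach'⟩
    · rintro ⟨T', h', hreach⟩
      refine ⟨{s₁ | ∃ s' ∈ T', reachIn R k s₁ s'},
        (MDL.sat_diaIter_iff R π φ k _).2 ⟨T', h', fun _ hs₁ => hs₁⟩, fun s hs => ?_⟩
      obtain ⟨s', hs', s₁, hss₁, hreach'⟩ := hreach s hs
      exact ⟨s₁, ⟨s', hs', hreach'⟩, hss₁⟩

namespace CNFReduction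

variable {m n : ℕ}

abbrev World (m n : ℕ) : Type := Fin m ⊕ ((Fin n × Fin n × Bool) ⊕ (Fin n × Bool))

/- With 0-based indices, `chain j l true` is the world `u_{j,l+1}` of the paper,
`chain j l false` is `ū_{j,l+1}`, and `tip k true`, `tip k false` are `t_{k+1}`, `t̄_{k+1}`. -/
abbrev chain (j l : Fin n) (b : Bool) : World m n := Sum.inr (Sum.inl (j, l, b))

abbrev tip (k : Fin n) (b : Bool) : World m n := Sum.inr (Sum.inr (k, b))

variable (C : Fin m → Fin n → Option Bool)

def rel : World m n → World m n → Prop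
  | Sum.inl i, Sum.inr (Sum.inl (j, k, b)) => (k : ℕ) = 0 ∧ C i j = some b
  | Sum.inr (Sum.inl (j, k, b)), Sum.inr (Sum.inl (j', k', b')) =>
      j = j' ∧ b = b' ∧ (k' : ℕ) = (k : ℕ) + 1
  | Sum.inr (Sum.inl (j, k, b)), Sum.inr (Sum.inr (k', b')) => k = k' ∧ (b = b' ∨ j ≠ k)
  | Sum.inl _, Sum.inl _ | Sum.inl _, Sum.inr (Sum.inr _) | Sum.inr (Sum.inl _), Sum.inl _
  | Sum.inr (Sum.inr _), _ => False

def label : World m n → Set (Fin n ⊕ Fin n)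
  | Sum.inr (Sum.inr (k, true)) => {Sum.inl k, Sum.inr k}
  | Sum.inr (Sum.inr (k, false)) => {Sum.inl k}
  | Sum.inl _ | Sum.inr (Sum.inl _) => ∅

def target (j : Fin n) : MDL (Fin n ⊕ Fin n) :=
  .and (.atom (Sum.inl j)) (.dep [] (Sum.inr j))

def formula (n : ℕ) : MDL (Fin n ⊕ Fin n) :=
  .dia (.bigAnd ((List.finRange n).map fun j : Fin n => .diaIter ((j : ℕ) + 1) (target j)))

theorem eq_tip_of_mem_label {s : World m n} {j : Fin n} (h : Sum.inl j ∈ label s) :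
    ∃ b, s = tip j b := by
  rcases s with _ | _ | ⟨k, _ | _⟩ <;> simp_all [label]

theorem mem_label_tip_iff {k : Fin n} {b : Bool} {a : Fin n ⊕ Fin n} :
    a ∈ label (tip (m := m) k b) ↔ a = Sum.inl k ∨ (b = true ∧ a = Sum.inr k) := by
  cases b <;> simp [label]

theorem reachIn_chain {j : Fin n} {b : Bool} :
    ∀ (k : ℕ) {l l' : Fin n}, (l : ℕ) + k = l' → reachIn (rel C) k (chain j l b) (chain j l' b)
  | 0, l, l', h => by obtain rfl : l = l' := Fin.ext (by simpa using h); rfl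
  | k + 1, l, l', h =>
    have hl : (l : ℕ) + 1 < n := by omega
    ⟨chain j ⟨l + 1, hl⟩ b, ⟨rfl, rfl, rfl⟩, reachIn_chain k (by simp only; omega)⟩

theorem not_reachIn_succ_tip {k : ℕ} {k' : Fin n} {b : Bool} {s : World m n} :
    ¬ reachIn (rel C) (k + 1) (tip k' b) s := by
  rintro ⟨s', h, -⟩
  rcases s' with _ | _ | _ <;> exact h

/- Tips have no successors, so such a path runs down the chain and leaves it only at its
last step. -/
theorem reachIn_chain_tip {j : Fin n} {b b' : Bool} {k' : Fin n} :
    ∀ (k : ℕ) {l : Fin n}, reachIn (rel C) (k + 1) (chain j l b) (tip k' b') →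
      (k' : ℕ) = l + k ∧ (b = b' ∨ j ≠ k')
  | 0, l, ⟨_, h, rfl⟩ => by obtain ⟨rfl, hb⟩ := h; exact ⟨rfl, hb⟩
  | k + 1, l, ⟨s₁, h₁, h⟩ => by
    rcases s₁ with _ | ⟨j₁, l₁, b₁⟩ | _
    · exact h₁.elim
    · obtain ⟨rfl, rfl, hl₁⟩ := h₁
      obtain ⟨hk', hb⟩ := reachIn_chain_tip k h
      exact ⟨by omega, hb⟩
    · exact (not_reachIn_succ_tip C h).elim

theorem sat_formula_of_satisfiable (h : CNF.Satisfiable C) :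
    MDL.sat (rel C) label (formula n) (Set.range Sum.inl) := by
  obtain ⟨θ, hθ⟩ := h
  refine ⟨{s | ∃ j l : Fin n, (l : ℕ) = 0 ∧ s = chain j l (θ j)}, ?_, ?_⟩
  · rw [MDL.sat_bigAnd]
    simp only [List.mem_map, List.mem_finRange, true_and, forall_exists_index]
    rintro _ j rfl
    refine (MDL.sat_diaIter_iff _ _ _ _ _).2 ⟨{tip j (θ j)}, ⟨?_, ?_⟩, ?_⟩
    · rintro _ rfl
      exact mem_label_tip_iff.2 (Or.inl rfl)
    · rintro _ rfl _ rfl _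
      rfl
    · rintro _ ⟨j', l, hl, rfl⟩
      have hjump : rel C (chain j' j (θ j')) (tip j (θ j)) :=
        ⟨rfl, (eq_or_ne j' j).imp (fun h => by rw [h]) id⟩
      exact ⟨tip j (θ j), rfl,
        reachIn_succ_of_reachIn_of_rel (reachIn_chain C j (by omega)) hjump⟩
  · rintro _ ⟨i, rfl⟩
    obtain ⟨j, hj⟩ := hθ i
    exact ⟨chain j ⟨0, j.pos⟩ (θ j), ⟨j, _, rfl, rfl⟩, rfl, hj⟩

theorem eq_of_chain_mem_of_sat_diaIter {j : Fin n} {T : Set (World m n)}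
    (hT : MDL.sat (rel C) label (MDL.diaIter ((j : ℕ) + 1) (target j)) T)
    {l l' : Fin n} (hl : (l : ℕ) = 0) (hl' : (l' : ℕ) = 0) {b b' : Bool}
    (h : chain j l b ∈ T) (h' : chain j l' b' ∈ T) : b = b' := by
  obtain ⟨F, ⟨hlabel, hdep⟩, hreach⟩ := (MDL.sat_diaIter_iff _ _ _ _ _).1 hT
  have tip_mem : ∀ {l : Fin n} {b : Bool}, (l : ℕ) = 0 → chain j l b ∈ T → tip j b ∈ F := by
    intro l b hl hmem
    obtain ⟨s, hs, hpath⟩ := hreach _ hmem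
    obtain ⟨b₀, rfl⟩ := eq_tip_of_mem_label (hlabel s hs)
    obtain ⟨-, hb⟩ := reachIn_chain_tip C j hpath
    rwa [hb.resolve_right (not_not_intro rfl)]
  have := hdep _ (tip_mem hl h) _ (tip_mem hl' h') (by simp)
  simpa [mem_label_tip_iff] using this

theorem satisfiable_of_sat_formula (h : MDL.sat (rel C) label (formula n) (Set.range Sum.inl)) :
    CNF.Satisfiable C := by
  obtain ⟨T, hT, hsucc⟩ := h
  rw [MDL.sat_bigAnd] at hT
  classical
  refine ⟨fun j => decide (∃ l : Fin n, (l : ℕ) = 0 ∧ chain j l true ∈ T), fun i => ?_⟩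
  obtain ⟨s, hs, hrel⟩ := hsucc (Sum.inl i) ⟨i, rfl⟩
  rcases s with _ | ⟨j, l, b⟩ | _
  · exact hrel.elim
  · obtain ⟨hl, hC⟩ := hrel
    refine ⟨j, hC.trans (congrArg some ?_)⟩
    have hj := hT _ (List.mem_map_of_mem (List.mem_finRange j))
    cases b
    · refine (decide_eq_false ?_).symm
      rintro ⟨l', hl', h'⟩
      exact Bool.noConfusion (eq_of_chain_mem_of_sat_diaIter C hj hl' hl h' hs)
    · exact (decide_eq_true ⟨l, hl, hs⟩).symm
  · exact hrel.elim

theorem satisfiable_iff_sat_formula :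
    CNF.Satisfiable C ↔ MDL.sat (rel C) label (formula n) (Set.range Sum.inl) :=
  ⟨sat_formula_of_satisfiable C, satisfiable_of_sat_formula C⟩

end CNFReduction

/-- Reduction of CNF satisfiability to MDL model checking for
the fragment {◇, ∧, dep}.  Worlds: `Sum.inl i = c_i`,
`Sum.inr (Sum.inl (j, k, true)) = u_{j,k+1}`,
`Sum.inr (Sum.inl (j, k, false)) = ū_{j,k+1}` (0-based level `k`),
`Sum.inr (Sum.inr (k, true)) = t_{k+1}`, `Sum.inr (Sum.inr (k, false)) = t̄_{k+1}`.
Atomic propositions: `Sum.inl k = r_k`, `Sum.inr k = p_k`.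
`R` contains `(c_i, u_{j,1})` iff `x_j` occurs positively in `C_i` and
`(c_i, ū_{j,1})` iff it occurs negatively; the chain edges
`(u_{j,k}, u_{j,k+1})` and `(ū_{j,k}, ū_{j,k+1})`; and the edges
`(u_{j,k}, t_k)`, `(ū_{j,k}, t̄_k)` always, plus `(u_{j,k}, t̄_k)`,
`(ū_{j,k}, t_k)` whenever `j ≠ k`.  `π(t_k) = {r_k, p_k}`, `π(t̄_k) = {r_k}`,
`π = ∅` elsewhere.  Then `C₁ ∧ … ∧ C_m` is satisfiable iff
`W, {c₁,…,c_m} ⊨ ◇(⋀_{j=1}^n ◇^j (r_j ∧ dep(;p_j)))`. -/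
theorem stmt3 (m n : ℕ) (C : Fin m → Fin n → Option Bool) :
    CNF.Satisfiable C ↔
      MDL.sat (S := Fin m ⊕ ((Fin n × Fin n × Bool) ⊕ (Fin n × Bool)))
        (fun s s' =>
          match s, s' with
          | Sum.inl i, Sum.inr (Sum.inl (j, k, b)) =>
              (k : ℕ) = 0 ∧ C i j = some b
          | Sum.inr (Sum.inl (j, k, b)), Sum.inr (Sum.inl (j', k', b')) =>
              j = j' ∧ b = b' ∧ (k' : ℕ) = (k : ℕ) + 1
          | Sum.inr (Sum.inl (j, k, b)), Sum.inr (Sum.inr (k', b')) =>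
              k = k' ∧ (b = b' ∨ j ≠ k)
          | _, _ => False)
        (fun s => {a : Fin n ⊕ Fin n |
          match s with
          | Sum.inr (Sum.inr (k, true)) => a = Sum.inl k ∨ a = Sum.inr k
          | Sum.inr (Sum.inr (k, false)) => a = Sum.inl k
          | _ => False})
        (MDL.dia (MDL.bigAnd ((List.finRange n).map fun j : Fin n =>
          MDL.diaIter ((j : ℕ) + 1)
            (MDL.and (MDL.atom (Sum.inl j)) (MDL.dep [] (Sum.inr j))))))
        (Set.range Sum.inl) := by
  convert CNFReduction.satisfiable_iff_sat_formula C using 2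
  · funext s s'
    rcases s with _ | _ | _ <;> rcases s' with _ | _ | _ <;> rfl
  · funext s
    rcases s with _ | _ | ⟨_, _ | _⟩ <;> rfl
  · rfl
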